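/- arXiv:1512.01440 — 2 statements merged into one kernel-verified Lean document; each statement's English description precedes it below -/
import Mathlib

section
/- For any colour y = (u+σε, v+χε, t+ξε) ∈ Δ, the product y ⊙ conj(y) is congruent (modulo constant triples) to an R-polarized element R·Θ, where Θ = ((u−v)² + (v−t)² + (t−u)²)/2 + [(u−v)(σ−χ) + (v−t)(χ−ξ) + (t−u)(ξ−σ)]ε; in particular the real part of Θ is nonnegative, so Θ is a valid triangular coefficient. -/
/-- Triangular coefficients `q + ψ ε`. -/
abbrev T : Type := ℝ × (ℝ → ℝ)

/-- Addition of triangular coefficients. -/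
def Tadd (x y : T) : T := (x.1 + y.1, fun f => x.2 f + y.2 f)

/-- Multiplication of triangular coefficients (dual numbers, ε² = 0). -/
def Tmul (x y : T) : T := (x.1 * y.1, fun f => x.1 * y.2 f + y.1 * x.2 f)

/-- A colour: a triple of triangular coefficients indexed by the poles
`R = 0`, `G = 1`, `B = 2` in `ℤ/3ℤ`. -/
abbrev Colour : Type := ZMod 3 → T

/-- Mixing of colours: componentwise addition. -/
def Cadd (x y : Colour) : Colour := fun k => Tadd (x k) (y k)

/-- Multiplication of colours: convolution over the `ℤ/3ℤ` Latin square on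
the poles, with dual-number multiplication of the coefficients. -/
def Cmul (x y : Colour) : Colour := fun k => ∑ i : ZMod 3, Tmul (x i) (y (k - i))

/-- The achromatic (constant) triple associated to a triangular coefficient. -/
def constC (c : T) : Colour := fun _ => c

/-- The cancellation-law congruence: two colours are congruent iff they differ
by a constant triple. -/
def Cong (x y : Colour) : Prop := ∃ c : T, ∀ k, x k = Tadd (y k) c

/-- Conjugation: swap the `G` and `B` components. -/
def Cconj (x : Colour) : Colour := fun k => x (-k)

/-- The zero triangular coefficient. -/
def T0 : T := ((0 : ℝ), fun _ => (0 : ℝ))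

lemma sum_zmod3 {M : Type*} [AddCommMonoid M] (h : ZMod 3 → M) :
    ∑ i : ZMod 3, h i = h 0 + h 1 + h 2 := by
  have huniv : (Finset.univ : Finset (ZMod 3)) = {0, 1, 2} := by decide
  rw [huniv, Finset.sum_insert (by decide), Finset.sum_insert (by decide),
    Finset.sum_singleton, add_assoc]

/-- For `y = (u+σε, v+χε, t+ξε)`, the product `y ⊙ conj y` is congruent,
modulo constant triples, to the `R`-polarized element `R·Θ` with
`Θ = ((u−v)²+(v−t)²+(t−u)²)/2 + [(u−v)(σ−χ)+(v−t)(χ−ξ)+(t−u)(ξ−σ)]ε`,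
whose real part is nonnegative. -/
theorem stmt11 (u v t : ℝ) (σ χ ξ : ℝ → ℝ)
    (hu : 0 ≤ u) (hv : 0 ≤ v) (ht : 0 ≤ t) :
    let y : Colour := fun k => if k = 0 then (u, σ) else if k = 1 then (v, χ) else (t, ξ)
    let Θ : T := (((u - v) ^ 2 + (v - t) ^ 2 + (t - u) ^ 2) / 2,
      fun f => (u - v) * (σ f - χ f) + (v - t) * (χ f - ξ f) + (t - u) * (ξ f - σ f))
    0 ≤ Θ.1 ∧
      Cong (Cmul y (Cconj y)) (fun k => if k = 0 then Θ else T0) := by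
  intro y Θ
  constructor
  · positivity
  · refine ⟨(u*v + v*t + t*u, fun f => u*ξ f + t*σ f + v*σ f + u*χ f + t*χ f + v*ξ f), ?_⟩
    intro k
    have hk : k = 0 ∨ k = 1 ∨ k = 2 := by revert k; decide
    rcases hk with rfl | rfl | rfl <;>
      simp only [Cmul, Cconj, Tmul, Tadd, T0, sum_zmod3, y, Θ,
        show ((0:ZMod 3) - 1 = 2) from by decide, show ((0:ZMod 3) - 2 = 1) from by decide,
        show ((1:ZMod 3) - 0 = 1) from by decide, show ((1:ZMod 3) - 1 = 0) from by decide,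
        show ((1:ZMod 3) - 2 = 2) from by decide, show ((2:ZMod 3) - 0 = 2) from by decide,
        show ((2:ZMod 3) - 1 = 1) from by decide, show ((2:ZMod 3) - 2 = 0) from by decide,
        show ((-1:ZMod 3) + 0 = 2) from by decide, show ((-1:ZMod 3) + 1 = 0) from by decide,
        show ((-1:ZMod 3) + 2 = 1) from by decide, show ((-2:ZMod 3) + 0 = 1) from by decide,
        show ((-2:ZMod 3) + 1 = 2) from by decide, show ((-2:ZMod 3) + 2 = 0) from by decide,
        show ((-1:ZMod 3) = 2) from by decide, show ((-2:ZMod 3) = 1) from by decide,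
        show ¬((1:ZMod 3) = 0) from by decide, show ¬((2:ZMod 3) = 0) from by decide,
        show ¬((2:ZMod 3) = 1) from by decide,
        neg_zero, sub_zero, zero_sub, sub_self, if_true, if_false, ite_true, ite_false,
        eq_self_iff_true] <;>
      exact Prod.ext (by simp only [Prod.fst_add]; ring)
        (funext fun f => by simp only [Prod.snd_add, Pi.add_apply]; ring)
end

section
/- For y = (u+σε, v+χε, t+ξε) ∈ Δ with y ∉ S (i.e., not u = v = t), the element z = (1/Θ)·conj(y), where Θ is the triangular coefficient with y ⊙ conj(y) ≡ R·Θ, satisfies y ⊙ z ≡ 1 modulo the cancellation congruence. Hence every class outside the ideal S is invertible in Δ/S. -/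
/-- The unit colour `1 = R[1+0ε] + G[0+0ε] + B[0+0ε]`. -/
def oneC : Colour := fun k => if k = 0 then ((1 : ℝ), fun _ => (0 : ℝ)) else T0

set_option maxHeartbeats 2000000 in
/-- If `y = (u+σε, v+χε, t+ξε)` is not singular (not `u = v = t`), then
`z := (1/Θ)·conj y` satisfies `y ⊙ z ≡ 1` modulo the cancellation congruence,
where `Θ` is the triangular coefficient with `y ⊙ conj y ≡ R·Θ` and
`1/Θ = 1/Θ₁ + (−Θ₂/Θ₁²)ε`. -/
theorem stmt17 (u v t : ℝ) (σ χ ξ : ℝ → ℝ)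
    (hu : 0 ≤ u) (hv : 0 ≤ v) (ht : 0 ≤ t) (h : ¬(u = v ∧ v = t)) :
    let y : Colour := fun k => if k = 0 then (u, σ) else if k = 1 then (v, χ) else (t, ξ)
    let Θ : T := (((u - v) ^ 2 + (v - t) ^ 2 + (t - u) ^ 2) / 2,
      fun f => (u - v) * (σ f - χ f) + (v - t) * (χ f - ξ f) + (t - u) * (ξ f - σ f))
    let Θinv : T := (1 / Θ.1, fun f => -(Θ.2 f) / Θ.1 ^ 2)
    let z : Colour := fun k => Tmul Θinv (Cconj y k)
    Cong (Cmul y z) oneC := by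
  intro y Θ Θinv z
  have hΘ : ((u - v) ^ 2 + (v - t) ^ 2 + (t - u) ^ 2) / 2 ≠ 0 := by
    intro h0
    exact h ⟨by nlinarith [sq_nonneg (u-v), sq_nonneg (v-t), sq_nonneg (t-u)],
             by nlinarith [sq_nonneg (u-v), sq_nonneg (v-t), sq_nonneg (t-u)]⟩
  refine ⟨Tmul Θinv (u*v + v*t + t*u,
    fun f => u*(χ f) + v*(σ f) + v*(ξ f) + t*(χ f) + t*(σ f) + u*(ξ f)), fun k => ?_⟩
  have h3 : ∀ (f : ZMod 3 → T), ∑ i, f i = f 0 + f 1 + f 2 := fun f => Fin.sum_univ_three f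
  have hD : (u - v) ^ 2 + (v - t) ^ 2 + (t - u) ^ 2 ≠ 0 := fun h0 => hΘ (by rw [h0]; ring)
  rcases (by decide : ∀ k : ZMod 3, k = 0 ∨ k = 1 ∨ k = 2) k with rfl | rfl | rfl <;>
  · rw [show Cmul y z _ = _ from h3 _]
    simp (config := { decide := true }) only [y, z, Θ, Θinv, Cconj, oneC, Tmul, Tadd, T0,
      Prod.mk_add_mk, if_true, if_false]
    rw [Prod.ext_iff]
    constructor
    · field_simp
      ring
    · funext f
      simp only [Pi.add_apply]
      field_simp
      ring
end
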